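/- arXiv:2407.10600 — 4 statements merged into one kernel-verified Lean document; each statement's English description precedes it below -/
import Mathlib

section
/- Let S ⊂ ℝ^d be a finite set symmetric about the origin (S = −S) and let m ≥ 0. The Wronskian matrix W = W^{D_S}_{≤m} of the Dirichlet kernel D_S admits the factorization W = F · V_{≤m}(S)^T · V_{≤m}(S) · F^*, where V_{≤m}(S) is the |S| × p_m multivariate Vandermonde matrix of S and F = diag( i^{|α|}/α! )_{α ∈ ℙ_m}. Consequently W is Hermitian positive semidefinite and rank(W) = rank(V_{≤m}(S)). -/
open scoped BigOperators ComplexOrder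

/-- The finite set of multi-indices `α : Fin d → ℕ` with total degree `|α| ≤ k` (the set `ℙ_k`). -/
def MIdx (d k : ℕ) : Finset (Fin d → ℕ) :=
  (Fintype.piFinset fun _ => Finset.range (k + 1)).filter fun α => ∑ i, α i ≤ k

/-- Factorial of a multi-index, `α! = α₁!⋯α_d!`. -/
def mfact {d : ℕ} (α : Fin d → ℕ) : ℕ := ∏ j, Nat.factorial (α j)

/-- First-order partial derivative in the `j`-th coordinate of a `ℂ`-valued function on `ℝ^d`. -/
noncomputable def pd1 {d : ℕ} (j : Fin d) (f : (Fin d → ℝ) → ℂ) : (Fin d → ℝ) → ℂ :=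
  fun x => fderiv ℝ f x (Pi.single j 1)

/-- Iterated partial derivative in the `j`-th coordinate. -/
noncomputable def pdPow {d : ℕ} (j : Fin d) : ℕ → ((Fin d → ℝ) → ℂ) → ((Fin d → ℝ) → ℂ)
  | 0 => id
  | k + 1 => fun f => pd1 j (pdPow j k f)

/-- Partial derivative `∂^α` of a `ℂ`-valued function on `ℝ^d`, for a multi-index `α`. -/
noncomputable def pdMulti {d : ℕ} (α : Fin d → ℕ) (f : (Fin d → ℝ) → ℂ) : (Fin d → ℝ) → ℂ :=
  (List.finRange d).foldr (fun j g => pdPow j (α j) g) f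

/-- Mixed partial derivative `K^{(α,β)} = ∂_x^α ∂_y^β K` of a kernel. -/
noncomputable def mixedPartial {d : ℕ} (K : (Fin d → ℝ) → (Fin d → ℝ) → ℂ)
    (α β : Fin d → ℕ) : (Fin d → ℝ) → (Fin d → ℝ) → ℂ :=
  fun x y => pdMulti α (fun x' => pdMulti β (fun y' => K x' y') y) x

/-- The Dirichlet kernel `D_S(x,y) = Σ_{ω∈S} exp(i⟨x-y, ω⟩)` of a finite frequency set. -/
noncomputable def dirichletKer {d : ℕ} (S : Finset (Fin d → ℝ)) :
    (Fin d → ℝ) → (Fin d → ℝ) → ℂ :=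
  fun x y => ∑ ω ∈ S, Complex.exp (Complex.I * ((∑ l, (x l - y l) * ω l : ℝ) : ℂ))

/-- The Wronskian matrix `W^K_{≤m} = [K^{(α,β)}(0,0)/(α!β!)]_{α,β∈ℙ_m}` of a kernel. -/
noncomputable def wronskianC {d : ℕ} (m : ℕ) (K : (Fin d → ℝ) → (Fin d → ℝ) → ℂ) :
    Matrix ↥(MIdx d m) ↥(MIdx d m) ℂ :=
  fun α β => mixedPartial K α.1 β.1 0 0 / ((mfact α.1 : ℂ) * (mfact β.1 : ℂ))

/-- The multivariate Vandermonde matrix `V_{≤m}(S)` of a frequency set, over `ℂ`. -/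
noncomputable def VdMS {d : ℕ} (m : ℕ) (S : Finset (Fin d → ℝ)) :
    Matrix ↥S ↥(MIdx d m) ℂ :=
  fun ω α => ∏ j, ((ω.1 j : ℝ) : ℂ) ^ α.1 j

/-! ### Auxiliary machinery: explicit iterated partial derivatives of exponential sums -/

/-- The continuous linear map `x ↦ ∑ l, x l * a l`. -/
noncomputable def lmapA {d : ℕ} (a : Fin d → ℝ) : (Fin d → ℝ) →L[ℝ] ℝ :=
  ∑ l, a l • ContinuousLinearMap.proj l

lemma lmapA_apply {d : ℕ} (a : Fin d → ℝ) (x : Fin d → ℝ) :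
    lmapA a x = ∑ l, x l * a l := by
  simp [lmapA, ContinuousLinearMap.sum_apply, mul_comm]

lemma lmapA_single {d : ℕ} (a : Fin d → ℝ) (j : Fin d) :
    lmapA a (Pi.single j 1) = a j := by
  rw [lmapA_apply]; simp [Pi.single_apply]

/-- The basic exponential `x ↦ exp(i(⟨x,a⟩+b))`. -/
noncomputable def Efun {d : ℕ} (a : Fin d → ℝ) (b : ℝ) : (Fin d → ℝ) → ℂ :=
  fun x => Complex.exp (Complex.I * (((∑ l, x l * a l) + b : ℝ) : ℂ))

lemma Efun_hasFDerivAt {d : ℕ} (a : Fin d → ℝ) (b : ℝ) (x : Fin d → ℝ) :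
    HasFDerivAt (Efun a b)
      ((Complex.I * Efun a b x) • (Complex.ofRealCLM.comp (lmapA a))) x := by
  have h1 : HasFDerivAt (fun x : Fin d → ℝ => (∑ l, x l * a l) + b) (lmapA a) x := by
    have h := ((lmapA a).hasFDerivAt (x := x)).add_const b
    have he : (fun x : Fin d → ℝ => (∑ l, x l * a l) + b) = fun x => lmapA a x + b := by
      funext y; rw [lmapA_apply]
    rw [he]; simpa using h
  have h4 := ((Complex.ofRealCLM.hasFDerivAt).comp x h1 |>.const_mul Complex.I).cexp
  have h5 : HasFDerivAt (Efun a b)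
      (Complex.exp (Complex.I * (((∑ l, x l * a l) + b : ℝ) : ℂ)) •
        (Complex.I • (Complex.ofRealCLM.comp (lmapA a)))) x := h4
  rw [smul_smul, mul_comm] at h5
  exact h5

/-- Finite sums of scalar multiples of basic exponentials. -/
noncomputable def Gfun {d : ℕ} {ι : Type*} (S : Finset ι) (c : ι → ℂ)
    (a : ι → Fin d → ℝ) (b : ι → ℝ) : (Fin d → ℝ) → ℂ :=
  fun x => ∑ ω ∈ S, c ω * Efun (a ω) (b ω) x

lemma Gfun_congr {d : ℕ} {ι : Type*} {S : Finset ι} {c₁ c₂ : ι → ℂ}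
    {a : ι → Fin d → ℝ} {b : ι → ℝ} (h : ∀ ω ∈ S, c₁ ω = c₂ ω) :
    Gfun S c₁ a b = Gfun S c₂ a b := by
  funext x; exact Finset.sum_congr rfl fun ω hω => by rw [h ω hω]

lemma Gfun_hasFDerivAt {d : ℕ} {ι : Type*} (S : Finset ι) (c : ι → ℂ)
    (a : ι → Fin d → ℝ) (b : ι → ℝ) (x : Fin d → ℝ) :
    HasFDerivAt (Gfun S c a b)
      (∑ ω ∈ S, c ω • ((Complex.I * Efun (a ω) (b ω) x) •
        (Complex.ofRealCLM.comp (lmapA (a ω))))) x :=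
  HasFDerivAt.fun_sum fun ω _ => (Efun_hasFDerivAt (a ω) (b ω) x).const_mul (c ω)

lemma pd1_Gfun {d : ℕ} {ι : Type*} (S : Finset ι) (c : ι → ℂ)
    (a : ι → Fin d → ℝ) (b : ι → ℝ) (j : Fin d) :
    pd1 j (Gfun S c a b) = Gfun S (fun ω => Complex.I * (a ω j : ℂ) * c ω) a b := by
  funext x
  have h := (Gfun_hasFDerivAt S c a b x).fderiv
  simp only [pd1, h, ContinuousLinearMap.sum_apply, ContinuousLinearMap.coe_smul',
    Pi.smul_apply, ContinuousLinearMap.coe_comp', Function.comp_apply,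
    Complex.ofRealCLM_apply, lmapA_single, smul_eq_mul]
  exact Finset.sum_congr rfl fun ω _ => by ring

lemma pdPow_Gfun {d : ℕ} {ι : Type*} (S : Finset ι) (c : ι → ℂ)
    (a : ι → Fin d → ℝ) (b : ι → ℝ) (j : Fin d) (k : ℕ) :
    pdPow j k (Gfun S c a b) = Gfun S (fun ω => (Complex.I * (a ω j : ℂ)) ^ k * c ω) a b := by
  induction k generalizing c with
  | zero =>
    show Gfun S c a b = _
    exact Gfun_congr fun ω _ => by rw [pow_zero, one_mul]
  | succ k ih =>
    show pd1 j (pdPow j k (Gfun S c a b)) = _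
    rw [ih, pd1_Gfun]
    exact Gfun_congr fun ω _ => by ring

lemma foldr_Gfun {d : ℕ} {ι : Type*} (S : Finset ι) (c : ι → ℂ)
    (a : ι → Fin d → ℝ) (b : ι → ℝ) (α : Fin d → ℕ) (L : List (Fin d)) :
    L.foldr (fun j g => pdPow j (α j) g) (Gfun S c a b)
      = Gfun S (fun ω => (L.map fun j => (Complex.I * (a ω j : ℂ)) ^ α j).prod * c ω) a b := by
  induction L generalizing c with
  | nil =>
    show Gfun S c a b = _
    exact Gfun_congr fun ω _ => by simp
  | cons j L ih =>
    rw [List.foldr_cons, ih, pdPow_Gfun]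
    exact Gfun_congr fun ω _ => by rw [List.map_cons, List.prod_cons]; ring

lemma pdMulti_Gfun {d : ℕ} {ι : Type*} (S : Finset ι) (c : ι → ℂ)
    (a : ι → Fin d → ℝ) (b : ι → ℝ) (α : Fin d → ℕ) :
    pdMulti α (Gfun S c a b)
      = Gfun S (fun ω => (∏ j, (Complex.I * (a ω j : ℂ)) ^ α j) * c ω) a b := by
  rw [pdMulti, foldr_Gfun]
  exact Gfun_congr fun ω _ => by rw [Fin.prod_univ_def]

lemma ker_as_Gfun {d : ℕ} (S : Finset (Fin d → ℝ)) (x' : Fin d → ℝ) :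
    (fun y' => dirichletKer S x' y')
      = Gfun S (fun _ => 1) (fun ω => -ω) (fun ω => ∑ l, x' l * ω l) := by
  funext y'
  refine Finset.sum_congr rfl fun ω _ => ?_
  rw [one_mul]
  unfold Efun
  congr 2
  push_cast
  rw [← Finset.sum_add_distrib]
  refine Finset.sum_congr rfl fun l _ => ?_
  simp [Pi.neg_apply]; ring

lemma Fx_eq {d : ℕ} (S : Finset (Fin d → ℝ)) (β : Fin d → ℕ) :
    (fun x' => pdMulti β (fun y' => dirichletKer S x' y') 0)
      = Gfun S (fun ω => ∏ j, (Complex.I * (((-ω) j : ℝ) : ℂ)) ^ β j)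
          (fun ω => ω) (fun _ => 0) := by
  funext x'
  rw [ker_as_Gfun, pdMulti_Gfun]
  unfold Gfun Efun
  refine Finset.sum_congr rfl fun ω _ => ?_
  simp

lemma prod_mul_pow_aux {d : ℕ} (z : ℂ) (w : Fin d → ℂ) (γ : Fin d → ℕ) :
    ∏ j, (z * w j) ^ γ j = z ^ (∑ j, γ j) * ∏ j, (w j) ^ γ j := by
  simp [mul_pow, Finset.prod_mul_distrib, Finset.prod_pow_eq_pow_sum]

lemma mixed_val {d : ℕ} (S : Finset (Fin d → ℝ)) (α β : Fin d → ℕ) :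
    mixedPartial (dirichletKer S) α β 0 0
      = ∑ ω ∈ S, (Complex.I ^ (∑ j, α j) * ∏ j, ((ω j : ℝ) : ℂ) ^ α j) *
          ((-Complex.I) ^ (∑ j, β j) * ∏ j, ((ω j : ℝ) : ℂ) ^ β j) := by
  show pdMulti α (fun x' => pdMulti β (fun y' => dirichletKer S x' y') 0) 0 = _
  rw [Fx_eq, pdMulti_Gfun]
  unfold Gfun Efun
  refine Finset.sum_congr rfl fun ω _ => ?_
  have h1 : ∏ j, (Complex.I * ((ω j : ℝ) : ℂ)) ^ α j
      = Complex.I ^ (∑ j, α j) * ∏ j, ((ω j : ℝ) : ℂ) ^ α j := prod_mul_pow_aux _ _ _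
  have h2 : ∏ j, (Complex.I * ((((-ω) j : ℝ)) : ℂ)) ^ β j
      = (-Complex.I) ^ (∑ j, β j) * ∏ j, ((ω j : ℝ) : ℂ) ^ β j := by
    have key : ∀ j, (Complex.I * ((((-ω) j : ℝ)) : ℂ)) ^ β j
        = ((-Complex.I) * ((ω j : ℝ) : ℂ)) ^ β j := by
      intro j
      congr 1
      simp [Pi.neg_apply]
    rw [Finset.prod_congr rfl fun j _ => key j, prod_mul_pow_aux]
  beta_reduce
  rw [h1, h2]
  simp

lemma mfact_ne_zero {d : ℕ} (γ : Fin d → ℕ) : (mfact γ : ℂ) ≠ 0 := by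
  rw [Nat.cast_ne_zero, mfact]
  exact Finset.prod_ne_zero_iff.mpr fun j _ => Nat.factorial_ne_zero _

/-- For a finite set `S ⊂ ℝ^d` symmetric about the origin, the Wronskian
matrix `W = W^{D_S}_{≤m}` of the Dirichlet kernel factorizes as
`W = F · V_{≤m}(S)ᵀ · V_{≤m}(S) · F*` with `F = diag(i^{|α|}/α!)`; consequently `W` is
Hermitian positive semidefinite and `rank W = rank V_{≤m}(S)`. -/
theorem dirichlet_wronskian_factorization {d m : ℕ}
    (S : Finset (Fin d → ℝ)) (hS : ∀ ω ∈ S, -ω ∈ S) :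
    wronskianC m (dirichletKer S) =
        Matrix.diagonal (fun α : ↥(MIdx d m) => Complex.I ^ (∑ j, α.1 j) / (mfact α.1 : ℂ)) *
          (VdMS m S).transpose * VdMS m S *
          (Matrix.diagonal
            (fun α : ↥(MIdx d m) => Complex.I ^ (∑ j, α.1 j) / (mfact α.1 : ℂ))).conjTranspose ∧
      (wronskianC m (dirichletKer S)).PosSemidef ∧
      (wronskianC m (dirichletKer S)).rank = (VdMS m S).rank := by
  classical
  set Dg : ↥(MIdx d m) → ℂ := fun α => Complex.I ^ (∑ j, α.1 j) / (mfact α.1 : ℂ) with hDg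
  have hstar : ∀ β : ↥(MIdx d m),
      star (Dg β) = (-Complex.I) ^ (∑ j, β.1 j) / (mfact β.1 : ℂ) := by
    intro β
    simp [hDg, star_div₀, star_pow, Complex.star_def, Complex.conj_I]
  have hfactor : wronskianC m (dirichletKer S) =
      Matrix.diagonal Dg * (VdMS m S).transpose * VdMS m S *
        (Matrix.diagonal Dg).conjTranspose := by
    ext α β
    rw [Matrix.diagonal_conjTranspose]
    rw [Matrix.mul_diagonal]
    have hR : (Matrix.diagonal Dg * (VdMS m S).transpose * VdMS m S) α β
        = ∑ ω ∈ S, Dg α * ((∏ j, ((ω j : ℝ) : ℂ) ^ α.1 j) * ∏ j, ((ω j : ℝ) : ℂ) ^ β.1 j) := by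
      rw [Matrix.mul_assoc, Matrix.diagonal_mul, Matrix.mul_apply, Finset.mul_sum,
        ← Finset.sum_coe_sort S
        (fun ω => Dg α * ((∏ j, ((ω j : ℝ) : ℂ) ^ α.1 j) * ∏ j, ((ω j : ℝ) : ℂ) ^ β.1 j))]
      refine Finset.sum_congr rfl fun ω _ => ?_
      simp only [Matrix.transpose_apply, VdMS]
    rw [hR, wronskianC]
    beta_reduce
    rw [mixed_val, Finset.sum_div, Finset.sum_mul]
    refine Finset.sum_congr rfl fun ω _ => ?_
    rw [Pi.star_apply, hstar β]
    have hα := mfact_ne_zero α.1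
    have hβ := mfact_ne_zero β.1
    simp only [hDg]
    field_simp [hDg]
  have hVT : (VdMS m S).conjTranspose = (VdMS m S).transpose := by
    ext α ω
    simp only [Matrix.conjTranspose_apply, Matrix.transpose_apply, VdMS,
      ← Complex.ofReal_pow, ← Complex.ofReal_prod]
    exact Complex.conj_ofReal _
  have hN : wronskianC m (dirichletKer S) =
      (VdMS m S * (Matrix.diagonal Dg).conjTranspose).conjTranspose *
        (VdMS m S * (Matrix.diagonal Dg).conjTranspose) := by
    rw [hfactor, Matrix.conjTranspose_mul, Matrix.conjTranspose_conjTranspose, hVT]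
    simp [Matrix.mul_assoc]
  have hdet : IsUnit ((Matrix.diagonal Dg).conjTranspose).det := by
    rw [Matrix.diagonal_conjTranspose, Matrix.det_diagonal]
    rw [isUnit_iff_ne_zero]
    refine Finset.prod_ne_zero_iff.mpr fun α _ => ?_
    rw [Pi.star_apply]
    refine star_ne_zero.mpr ?_
    exact div_ne_zero (pow_ne_zero _ Complex.I_ne_zero) (mfact_ne_zero α.1)
  refine ⟨hfactor, ?_, ?_⟩
  · rw [hN]
    exact Matrix.posSemidef_conjTranspose_mul_self _
  · rw [hN, Matrix.rank_conjTranspose_mul_self]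
    exact Matrix.rank_mul_eq_left_of_isUnit_det _ _ hdet
end

section
/- Let n ≥ 1 and let J = {x_1,…,x_N} be a set of N = p_n = C(n+d,d) pairwise distinct points in ℝ^d satisfying the Geometric Characterization (GC) condition of degree n. Then the polynomial interpolation problem on J is poised for polynomials of total degree ≤ n: for every data vector (y_1,…,y_N) ∈ ℝ^N there exists a unique polynomial P in d variables of total degree ≤ n with P(x_i) = y_i for all i. Equivalently, the square Vandermonde matrix V_{≤n}(J) is invertible. -/
open scoped BigOperators

/-- The multivariate Vandermonde matrix `V_{≤k}(X)`. -/
noncomputable def VdM {n : ℕ} (d k : ℕ) (X : Fin n → Fin d → ℝ) :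
    Matrix (Fin n) ↥(MIdx d k) ℝ :=
  fun i α => ∏ j, X i j ^ α.1 j

/-- `H` is an affine hyperplane in `ℝ^d`, i.e. the zero set of a nonconstant affine
function. -/
def IsAffineHyperplane {d : ℕ} (H : Set (Fin d → ℝ)) : Prop :=
  ∃ (a : Fin d → ℝ) (b : ℝ), a ≠ 0 ∧ H = {x | ∑ l, a l * x l + b = 0}

/-- The Geometric Characterization (GC) condition of degree `n` for a family of nodes `P`:
for each node `P i` there exist `n` distinct affine hyperplanes avoiding `P i` and jointly
containing all the other nodes. -/
def SatisfiesGC {d : ℕ} {ι : Type*} (n : ℕ) (P : ι → Fin d → ℝ) : Prop :=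
  ∀ i : ι, ∃ H : Fin n → Set (Fin d → ℝ),
    (∀ j, IsAffineHyperplane (H j)) ∧ Function.Injective H ∧
    (∀ j, P i ∉ H j) ∧ (∀ i' : ι, i' ≠ i → ∃ j, P i' ∈ H j)

open MvPolynomial

lemma mem_MIdx_of {d n : ℕ} {α : Fin d → ℕ} (h : ∑ i, α i ≤ n) : α ∈ MIdx d n := by
  simp only [MIdx, Finset.mem_filter, Fintype.mem_piFinset, Finset.mem_range, Nat.lt_succ_iff]
  exact ⟨fun i => le_trans (Finset.single_le_sum (fun _ _ => Nat.zero_le _) (Finset.mem_univ i)) h, h⟩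

lemma sum_equivFun {d : ℕ} (σ : Fin d →₀ ℕ) :
    ∑ i, σ i = σ.sum fun _ e => e := by
  rw [Finsupp.sum_fintype]; intro i; rfl

lemma support_mem_MIdx {d n : ℕ} {p : MvPolynomial (Fin d) ℝ} (hp : p.totalDegree ≤ n)
    {σ : Fin d →₀ ℕ} (hσ : σ ∈ p.support) :
    (Finsupp.equivFunOnFinite σ : Fin d → ℕ) ∈ MIdx d n := by
  apply mem_MIdx_of
  have : ∑ i, σ i ≤ n := by
    rw [sum_equivFun]
    exact le_trans (MvPolynomial.le_totalDegree hσ) hp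
  simpa using this

lemma eval_eq_sum_MIdx {d n : ℕ} (p : MvPolynomial (Fin d) ℝ) (hp : p.totalDegree ≤ n)
    (x : Fin d → ℝ) :
    MvPolynomial.eval x p =
      ∑ α ∈ MIdx d n,
        MvPolynomial.coeff (Finsupp.equivFunOnFinite.symm α) p * ∏ j, x j ^ α j := by
  classical
  rw [MvPolynomial.eval_eq']
  rw [show (∑ α ∈ MIdx d n,
        MvPolynomial.coeff (Finsupp.equivFunOnFinite.symm α) p * ∏ j, x j ^ α j)
      = ∑ σ ∈ (MIdx d n).map ⟨_, Finsupp.equivFunOnFinite.symm.injective⟩,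
          MvPolynomial.coeff σ p * ∏ j, x j ^ σ j from by
    rw [Finset.sum_map]
    refine Finset.sum_congr rfl fun α _ => ?_
    simp]
  apply Finset.sum_subset
  · intro σ hσ
    simp only [Finset.mem_map, Function.Embedding.coeFn_mk]
    exact ⟨Finsupp.equivFunOnFinite σ, support_mem_MIdx hp hσ, by simp⟩
  · intro σ _ hσ
    rw [MvPolynomial.notMem_support_iff.mp hσ, zero_mul]

/-- If `J` is a set of `N = p_n` pairwise distinct points in `ℝ^d`
satisfying the GC condition of degree `n`, then the interpolation problem on `J` is poised
for polynomials of total degree `≤ n`: every data vector admits a unique interpolating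
polynomial of total degree `≤ n`.  Equivalently, the square Vandermonde matrix
`V_{≤n}(J)` is invertible (has rank `N`). -/
theorem gc_implies_poised {d n N : ℕ} (hd : 1 ≤ d) (hn : 1 ≤ n)
    (hN : N = (MIdx d n).card)
    (P : Fin N → Fin d → ℝ) (hP : Function.Injective P)
    (hGC : SatisfiesGC n P) :
    (∀ y : Fin N → ℝ, ∃! p : MvPolynomial (Fin d) ℝ,
      p.totalDegree ≤ n ∧ ∀ i : Fin N, MvPolynomial.eval (P i) p = y i) ∧
    (VdM d n P).rank = N := by

  classical
  -- Step 1: Lagrange-type polynomials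
  have hL : ∀ i : Fin N, ∃ L : MvPolynomial (Fin d) ℝ,
      L.totalDegree ≤ n ∧ MvPolynomial.eval (P i) L ≠ 0 ∧
      ∀ i', i' ≠ i → MvPolynomial.eval (P i') L = 0 := by
    intro i
    obtain ⟨H, hHyp, -, hnotin, hcover⟩ := hGC i
    choose a b ha hset using hHyp
    set ℓ : Fin n → MvPolynomial (Fin d) ℝ :=
      fun j => (∑ l, MvPolynomial.C (a j l) * MvPolynomial.X l) + MvPolynomial.C (b j) with hℓ
    have hev : ∀ j x, MvPolynomial.eval x (ℓ j) = ∑ l, a j l * x l + b j := by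
      intro j x; simp [hℓ]
    have hmem : ∀ j x, x ∈ H j ↔ MvPolynomial.eval x (ℓ j) = 0 := by
      intro j x
      rw [hev, hset j]; rfl
    refine ⟨∏ j, ℓ j, ?_, ?_, ?_⟩
    · refine le_trans (MvPolynomial.totalDegree_finset_prod _ _) ?_
      have : ∀ j ∈ Finset.univ, (ℓ j).totalDegree ≤ 1 := by
        intro j _
        refine le_trans (MvPolynomial.totalDegree_add _ _) (max_le ?_ (by simp))
        refine le_trans (MvPolynomial.totalDegree_finset_sum _ _) ?_
        refine Finset.sup_le fun l _ => ?_
        refine le_trans (MvPolynomial.totalDegree_mul _ _) ?_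
        simp
      calc ∑ j, (ℓ j).totalDegree ≤ ∑ _j : Fin n, 1 := Finset.sum_le_sum this
        _ = n := by simp
    · rw [map_prod]
      refine Finset.prod_ne_zero_iff.mpr fun j _ h => ?_
      exact hnotin j ((hmem j (P i)).mpr h)
    · intro i' hi'
      obtain ⟨j, hj⟩ := hcover i' hi'
      rw [map_prod]
      exact Finset.prod_eq_zero (Finset.mem_univ j) ((hmem j (P i')).mp hj)
  choose L hLdeg hLne hLzero using hL
  -- Step 2: right inverse of the Vandermonde matrix
  set Cm : Matrix ↥(MIdx d n) (Fin N) ℝ := fun α i' =>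
    MvPolynomial.coeff (Finsupp.equivFunOnFinite.symm α.1) (L i') /
      MvPolynomial.eval (P i') (L i') with hCm
  have hVC : VdM d n P * Cm = 1 := by
    ext i i'
    rw [Matrix.mul_apply]
    have : ∑ α : ↥(MIdx d n), VdM d n P i α * Cm α i'
        = (∑ α ∈ MIdx d n,
            MvPolynomial.coeff (Finsupp.equivFunOnFinite.symm α) (L i') * ∏ j, P i j ^ α j)
          / MvPolynomial.eval (P i') (L i') := by
      rw [Finset.sum_div, ← Finset.sum_coe_sort (MIdx d n)]
      refine Finset.sum_congr rfl fun α _ => ?_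
      rw [hCm, VdM]
      ring
    rw [this, ← eval_eq_sum_MIdx _ (hLdeg i') (P i)]
    by_cases h : i = i'
    · subst h
      rw [div_self (hLne i)]
      simp
    · rw [hLzero i' i h, zero_div]
      simp [Matrix.one_apply, h]
  -- reindexing equivalence
  have hcard : Fintype.card ↥(MIdx d n) = N := by
    rw [Fintype.card_coe, hN]
  let e : ↥(MIdx d n) ≃ Fin N := Fintype.equivFinOfCardEq hcard
  let B : Matrix (Fin N) (Fin N) ℝ := (VdM d n P).submatrix id ⇑e.symm
  have hBC : B * Cm.submatrix ⇑e.symm id = 1 := by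
    ext i i'
    rw [Matrix.mul_apply]
    have := congrFun (congrFun hVC i) i'
    rw [Matrix.mul_apply] at this
    rw [← this]
    exact Equiv.sum_comp e.symm (fun α => VdM d n P i α * Cm α i')
  haveI : Invertible B := invertibleOfRightInverse _ _ hBC
  have hBunit : IsUnit B := isUnit_of_invertible B
  have hrank : (VdM d n P).rank = N := by
    have hsurj : Function.Surjective (VdM d n P).mulVecLin := by
      intro yv
      refine ⟨Cm.mulVec yv, ?_⟩
      rw [Matrix.mulVecLin_apply, Matrix.mulVec_mulVec, hVC, Matrix.one_mulVec]
    rw [Matrix.rank, LinearMap.range_eq_top.mpr hsurj, finrank_top]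
    simp
  refine ⟨?_, hrank⟩
  -- mulVec injectivity
  have hinj : ∀ v : ↥(MIdx d n) → ℝ, (VdM d n P).mulVec v = 0 → v = 0 := by
    intro v hv
    have hB : B.mulVec (v ∘ ⇑e.symm) = 0 := by
      funext i
      have : B.mulVec (v ∘ ⇑e.symm) i = (VdM d n P).mulVec v i := by
        rw [Matrix.mulVec, Matrix.mulVec, dotProduct, dotProduct]
        exact Equiv.sum_comp e.symm (fun α => VdM d n P i α * v α)
      rw [this]; exact congrFun hv i
    have : v ∘ ⇑e.symm = 0 := by
      have h2 := congrArg (fun w => Matrix.mulVec B⁻¹ w) hB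
      simpa [Matrix.mulVec_mulVec,
        Matrix.nonsing_inv_mul B (Matrix.isUnit_det_of_invertible B)] using h2
    funext α
    have := congrFun this (e α)
    simpa using this
  intro y
  -- existence
  refine ⟨∑ i, MvPolynomial.C (y i / MvPolynomial.eval (P i) (L i)) * L i, ⟨?_, ?_⟩, ?_⟩
  · refine le_trans (MvPolynomial.totalDegree_finset_sum _ _) ?_
    refine Finset.sup_le fun i _ => ?_
    refine le_trans (MvPolynomial.totalDegree_mul _ _) ?_
    simpa using hLdeg i
  · intro i
    rw [map_sum]
    rw [Finset.sum_eq_single i]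
    · simp [div_mul_cancel₀ _ (hLne i)]
    · intro i' _ hi'
      simp [hLzero i' i (Ne.symm hi')]
    · simp
  · -- uniqueness
    rintro q ⟨hqdeg, hqev⟩
    set p := ∑ i, MvPolynomial.C (y i / MvPolynomial.eval (P i) (L i)) * L i with hpdef
    have hpdeg : p.totalDegree ≤ n := by
      refine le_trans (MvPolynomial.totalDegree_finset_sum _ _) ?_
      refine Finset.sup_le fun i _ => ?_
      refine le_trans (MvPolynomial.totalDegree_mul _ _) ?_
      simpa using hLdeg i
    have hpev : ∀ i, MvPolynomial.eval (P i) p = y i := by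
      intro i
      rw [hpdef, map_sum, Finset.sum_eq_single i]
      · simp [div_mul_cancel₀ _ (hLne i)]
      · intro i' _ hi'
        simp [hLzero i' i (Ne.symm hi')]
      · simp
    -- q - p has degree ≤ n and vanishes on all nodes
    have hrdeg : (q - p).totalDegree ≤ n := by
      refine le_trans (MvPolynomial.totalDegree_sub _ _) (max_le hqdeg hpdeg)
    have hrev : ∀ i, MvPolynomial.eval (P i) (q - p) = 0 := by
      intro i
      rw [map_sub, hqev i, hpev i, sub_self]
    have hvec : (VdM d n P).mulVec
        (fun α : ↥(MIdx d n) =>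
          MvPolynomial.coeff (Finsupp.equivFunOnFinite.symm α.1) (q - p)) = 0 := by
      funext i
      have key : (VdM d n P).mulVec
          (fun α : ↥(MIdx d n) =>
            MvPolynomial.coeff (Finsupp.equivFunOnFinite.symm α.1) (q - p)) i
          = MvPolynomial.eval (P i) (q - p) := by
        rw [Matrix.mulVec, dotProduct, eval_eq_sum_MIdx _ hrdeg,
          ← Finset.sum_coe_sort (MIdx d n)]
        refine Finset.sum_congr rfl fun α _ => ?_
        rw [VdM]; ring
      rw [key, hrev i]; rfl
    have hzero := hinj _ hvec
    have : q - p = 0 := by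
      by_contra hne
      obtain ⟨σ, hσ⟩ := (MvPolynomial.ne_zero_iff).mp hne
      have hσs : σ ∈ (q - p).support := MvPolynomial.mem_support_iff.mpr hσ
      have hm : (Finsupp.equivFunOnFinite σ : Fin d → ℕ) ∈ MIdx d n :=
        support_mem_MIdx hrdeg hσs
      have := congrFun hzero ⟨Finsupp.equivFunOnFinite σ, hm⟩
      simp only [Pi.zero_apply] at this
      rw [Equiv.symm_apply_apply] at this
      exact hσ this
    exact sub_eq_zero.mp this
end

section
/- Let X ⊂ ℝ^d be a finite set of n pairwise distinct points with discrete moment order m = μ(X), and let ℓ be the unique integer with p_{ℓ−1} < n ≤ p_ℓ. Then for every N ≥ ℓ, the Vandermonde matrix of the uniform symmetric grid satisfies rank( V_{≤m}(Γ_N) ) ≥ n. -/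
open scoped BigOperators

/-- The uniform symmetric grid `Γ_N = {-N, …, N}^d ⊂ ℤ^d`. -/
noncomputable def gridSet (d N : ℕ) : Finset (Fin d → ℤ) :=
  Fintype.piFinset fun _ => Finset.Icc (-(N : ℤ)) (N : ℤ)

/-- The multivariate Vandermonde matrix `V_{≤k}(Γ_N)` of the uniform symmetric grid. -/
noncomputable def gridVdM (d k N : ℕ) : Matrix ↥(gridSet d N) ↥(MIdx d k) ℝ :=
  fun ω α => ∏ j, ((ω.1 j : ℤ) : ℝ) ^ α.1 j

/-- A multivariate polynomial whose degree in each variable is less than the size of a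
finite grid in that variable, and which vanishes on the product grid, is zero. -/
lemma mv_vanish_on_grid : ∀ (d : ℕ) (S : Fin d → Finset ℝ) (p : MvPolynomial (Fin d) ℝ),
    (∀ i, p.degreeOf i < (S i).card) →
    (∀ x : Fin d → ℝ, (∀ i, x i ∈ S i) → MvPolynomial.eval x p = 0) → p = 0 := by
  intro d
  induction d with
  | zero =>
    intro S p _ hval
    have h := hval (fun i => i.elim0) (fun i => i.elim0)
    rw [MvPolynomial.eq_C_of_isEmpty p] at h ⊢
    rw [MvPolynomial.eval_C] at h
    rw [h, map_zero]
  | succ d ih =>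
    intro S p hdeg hval
    set q := MvPolynomial.finSuccEquiv ℝ d p with hq
    have hq0 : q = 0 := by
      apply Polynomial.ext
      intro k
      rw [Polynomial.coeff_zero]
      apply ih (fun i => S i.succ) _ (fun i => lt_of_le_of_lt
        (MvPolynomial.degreeOf_coeff_finSuccEquiv p i k) (hdeg i.succ))
      intro xs hxs
      have hr : (q.map (MvPolynomial.eval xs)) = 0 := by
        apply Polynomial.eq_zero_of_natDegree_lt_card_of_eval_eq_zero' _ (S 0)
        · intro y hy
          rw [← MvPolynomial.eval_eq_eval_mv_eval']
          apply hval
          intro i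
          refine Fin.cases ?_ ?_ i
          · simpa using hy
          · intro j; simpa using hxs j
        · refine lt_of_le_of_lt Polynomial.natDegree_map_le ?_
          rw [hq, MvPolynomial.natDegree_finSuccEquiv]
          exact hdeg 0
      have := congrArg (fun r => Polynomial.coeff r k) hr
      simpa [Polynomial.coeff_map] using this
    have : p = (MvPolynomial.finSuccEquiv ℝ d).symm q := by
      rw [hq, AlgEquiv.symm_apply_apply]
    rw [this, hq0, map_zero]

/-- Selecting a subset of columns does not increase the rank. -/
lemma rank_submatrix_cols_le {m' n' o' : Type*} [Fintype m'] [Fintype n'] [Fintype o']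
    [DecidableEq n'] (A : Matrix m' n' ℝ) (e : o' → n') :
    (A.submatrix id e).rank ≤ A.rank := by
  rw [Matrix.rank, Matrix.rank]
  apply Submodule.finrank_mono
  rintro v ⟨c, rfl⟩
  refine ⟨fun β => ∑ α, if e α = β then c α else 0, ?_⟩
  ext ω
  simp only [Matrix.mulVecLin_apply, Matrix.mulVec, dotProduct, Matrix.submatrix_apply,
    id_eq, Finset.mul_sum]
  rw [Finset.sum_comm]
  refine Finset.sum_congr rfl fun α _ => ?_
  rw [Finset.sum_eq_single (e α)] <;> simp +contextual [eq_comm]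

lemma mem_MIdx {d k : ℕ} (α : Fin d → ℕ) : α ∈ MIdx d k ↔ ∑ i, α i ≤ k := by
  simp only [MIdx, Finset.mem_filter, Fintype.mem_piFinset, Finset.mem_range]
  refine ⟨fun h => h.2, fun h => ⟨fun i => Nat.lt_succ_of_le ?_, h⟩⟩
  exact (Finset.single_le_sum (f := α) (fun i _ => Nat.zero_le _) (Finset.mem_univ i)).trans h

/-- For `k ≤ N`, the grid Vandermonde matrix `V_{≤k}(Γ_N)` has full column rank. -/
lemma gridVdM_rank_eq (d k N : ℕ) (hkN : k ≤ N) : (gridVdM d k N).rank = (MIdx d k).card := by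
  classical
  have hinj : Function.Injective (gridVdM d k N).mulVecLin := by
    rw [injective_iff_map_eq_zero]
    intro c hc
    set p : MvPolynomial (Fin d) ℝ :=
      ∑ α : ↥(MIdx d k), MvPolynomial.monomial (Finsupp.equivFunOnFinite.symm α.1) (c α) with hpdef
    have hsum : ∀ α : ↥(MIdx d k),
        ((Finsupp.equivFunOnFinite.symm α.1).sum fun _ => id) = ∑ i, α.1 i := by
      intro α
      rw [Finsupp.sum_fintype]
      · simp
      · intro; rfl
    have htd : p.totalDegree ≤ k := by
      refine (MvPolynomial.totalDegree_finset_sum _ _).trans (Finset.sup_le fun α _ => ?_)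
      refine (MvPolynomial.totalDegree_monomial_le _ _).trans ?_
      rw [hsum α]
      exact (mem_MIdx α.1).mp α.2
    have hcard : ((Finset.Icc (-(N:ℤ)) N).image (Int.cast : ℤ → ℝ)).card = 2*N+1 := by
      rw [Finset.card_image_of_injective _ Int.cast_injective, Int.card_Icc]
      omega
    have hp0 : p = 0 := by
      apply mv_vanish_on_grid d (fun _ => (Finset.Icc (-(N:ℤ)) N).image (Int.cast : ℤ → ℝ))
      · intro i
        rw [hcard]
        exact lt_of_le_of_lt (le_trans (MvPolynomial.degreeOf_le_totalDegree p i) (htd.trans hkN))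
          (by omega)
      · intro x hx
        choose z hz1 hz2 using fun i => Finset.mem_image.mp (hx i)
        have hzmem : z ∈ gridSet d N := by
          rw [gridSet, Fintype.mem_piFinset]; exact hz1
        have h := congrFun hc ⟨z, hzmem⟩
        simp only [Matrix.mulVecLin_apply, Matrix.mulVec, dotProduct, gridVdM,
          Pi.zero_apply] at h
        rw [hpdef, map_sum, ← h]
        refine Finset.sum_congr rfl fun α _ => ?_
        simp only [MvPolynomial.eval_monomial, Finsupp.prod_pow,
          Finsupp.coe_equivFunOnFinite_symm]
        rw [mul_comm]
        congr 1
        exact Finset.prod_congr rfl fun j _ => by rw [hz2 j]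
    funext β
    have hco := congrArg (MvPolynomial.coeff (Finsupp.equivFunOnFinite.symm β.1)) hp0
    simpa [hpdef, MvPolynomial.coeff_sum, MvPolynomial.coeff_monomial,
      EmbeddingLike.apply_eq_iff_eq, Subtype.val_inj, Finset.sum_ite_eq'] using hco
  rw [Matrix.rank, LinearMap.finrank_range_of_inj hinj, Module.finrank_pi, Fintype.card_coe]

/-- Let `X` be `n` pairwise distinct points in `ℝ^d` with discrete moment
order `m = μ(X)`, and let `ℓ` be the unique integer with `p_{ℓ-1} < n ≤ p_ℓ`.  Then for
every `N ≥ ℓ`, the Vandermonde matrix of the uniform symmetric grid satisfies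
`rank V_{≤m}(Γ_N) ≥ n`. -/
theorem grid_vandermonde_rank_ge {d n m ℓ : ℕ}
    (X : Fin n → Fin d → ℝ) (hX : Function.Injective X)
    (hm : (VdM d m X).rank = n)
    (hm' : ∀ m' : ℕ, m' < m → (VdM d m' X).rank ≠ n)
    (hℓ : n ≤ (MIdx d ℓ).card)
    (hℓ' : ∀ ℓ' : ℕ, ℓ' < ℓ → (MIdx d ℓ').card < n) :
    ∀ N : ℕ, ℓ ≤ N → n ≤ (gridVdM d m N).rank := by
  classical
  intro N hN
  have hlm : ℓ ≤ m := by
    by_contra h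
    push_neg at h
    have h1 := hℓ' m h
    have h2 : (VdM d m X).rank ≤ (MIdx d m).card :=
      (Matrix.rank_le_card_width _).trans_eq (Fintype.card_coe _)
    rw [hm] at h2
    omega
  let e : ↥(MIdx d ℓ) → ↥(MIdx d m) := fun α =>
    ⟨α.1, (mem_MIdx _).mpr (((mem_MIdx _).mp α.2).trans hlm)⟩
  have hsub : (gridVdM d m N).submatrix id e = gridVdM d ℓ N := rfl
  calc n ≤ (MIdx d ℓ).card := hℓ
    _ = (gridVdM d ℓ N).rank := (gridVdM_rank_eq d ℓ N hN).symm
    _ = ((gridVdM d m N).submatrix id e).rank := by rw [hsub]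
    _ ≤ (gridVdM d m N).rank := rank_submatrix_cols_le _ _
end

section
/- Let Y = {y_1,…,y_n} ⊂ ℝ^d be a finite set of pairwise distinct points and fix ε_0 > 0. For N ∈ ℕ and ε ≥ 0 define the n×n matrix D_N(ε) with entries (D_N(ε))_{jl} = (2N)^{−d} Σ_{ω∈Γ_N} exp( i ⟨ ε(y_j − y_l)/N, ω⟩ ). Then the entries of D_N(ε) converge to those of the sinc kernel matrix Sinc_ε(Y) uniformly in ε ∈ [0, ε_0]: for every δ > 0 there exists M = M(ε_0, δ) such that for all N ≥ M, all ε ∈ [0, ε_0], and all indices j, l, |(D_N(ε))_{jl} − (Sinc_ε(Y))_{jl}| ≤ δ. -/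
open scoped BigOperators

/-- The (unnormalized) sinc function: `sinc x = sin x / x` for `x ≠ 0`, `sinc 0 = 1`. -/
noncomputable def sinc (x : ℝ) : ℝ := if x = 0 then 1 else Real.sin x / x

/-- The normalized Dirichlet kernel matrix
`(D_N(ε))_{jl} = (2N)^{-d} Σ_{ω∈Γ_N} exp(i⟨ε(y_j - y_l)/N, ω⟩)`. -/
noncomputable def DNe {d n : ℕ} (Y : Fin n → Fin d → ℝ) (N : ℕ) (ε : ℝ) :
    Matrix (Fin n) (Fin n) ℂ :=
  fun j l => ((((2 * (N : ℝ)) ^ d)⁻¹ : ℝ) : ℂ) *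
    ∑ ω ∈ gridSet d N,
      Complex.exp (Complex.I * ((∑ i, ε * (Y j i - Y l i) / (N : ℝ) * (ω i : ℝ) : ℝ) : ℂ))

/-- The sinc kernel matrix `Sinc_ε(Y) = [Π_l sinc(ε((y_j)_l - (y_k)_l))]_{j,k}`. -/
noncomputable def sincMat {d n : ℕ} (Y : Fin n → Fin d → ℝ) (ε : ℝ) :
    Matrix (Fin n) (Fin n) ℝ :=
  fun j k => ∏ l, sinc (ε * (Y j l - Y k l))

set_option linter.unusedVariables false

open Complex Finset

noncomputable def Complex.abs : AbsoluteValue ℂ ℝ where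
  toFun := fun z => ‖z‖
  map_mul' := norm_mul
  nonneg' := norm_nonneg
  eq_zero' := fun _ => norm_eq_zero
  add_le' := norm_add_le

theorem Complex.norm_eq_abs (z : ℂ) : ‖z‖ = Complex.abs z := rfl

@[simp] theorem Complex.abs_ofReal (r : ℝ) : Complex.abs (r : ℂ) = |r| := Complex.norm_real r

@[simp] theorem Complex.abs_I : Complex.abs Complex.I = 1 := Complex.norm_I

theorem Complex.abs_two : Complex.abs 2 = 2 := Complex.norm_two

private lemma hasDerivAt_expI (a t : ℝ) :
    HasDerivAt (fun s : ℝ => Complex.exp (Complex.I * a * s))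
      (Complex.I * a * Complex.exp (Complex.I * a * t)) t := by
  have h : HasDerivAt (fun z : ℂ => Complex.exp (Complex.I * a * z))
      (Complex.I * a * Complex.exp (Complex.I * a * (t : ℂ))) (t : ℂ) := by
    have := ((hasDerivAt_id ((t : ℝ) : ℂ)).const_mul (Complex.I * (a : ℂ))).cexp
    simpa [mul_comm] using this
  exact h.comp_ofReal

private lemma abs_expI (x : ℝ) : Complex.abs (Complex.exp (Complex.I * x)) = 1 := by
  rw [← Complex.norm_eq_abs, Complex.norm_exp]
  simp [Complex.mul_re]

private lemma abs_expI' (a x : ℝ) : Complex.abs (Complex.exp (Complex.I * a * x)) = 1 := by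
  rw [show (Complex.I * a * x : ℂ) = Complex.I * ((a*x : ℝ) : ℂ) by push_cast; ring, abs_expI]

private lemma expI_lip (a x y : ℝ) :
    Complex.abs (Complex.exp (Complex.I * a * y) - Complex.exp (Complex.I * a * x))
      ≤ |a| * |y - x| := by
  have h := Convex.norm_image_sub_le_of_norm_hasDerivWithin_le
    (f := fun s : ℝ => Complex.exp (Complex.I * a * s))
    (f' := fun s : ℝ => Complex.I * a * Complex.exp (Complex.I * a * s))
    (s := Set.univ) (C := |a|)
    (fun t _ => (hasDerivAt_expI a t).hasDerivWithinAt)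
    (fun t _ => by
      rw [Complex.norm_eq_abs, map_mul, map_mul, abs_expI' a t]
      simp)
    convex_univ (Set.mem_univ x) (Set.mem_univ y)
  simpa [Complex.norm_eq_abs, Real.norm_eq_abs] using h

private lemma key_mvt (a x y : ℝ) :
    Complex.abs ((Complex.exp (Complex.I * a * y) - Complex.exp (Complex.I * a * x))
      - Complex.I * a * ((y - x : ℝ) : ℂ) * Complex.exp (Complex.I * a * y))
      ≤ a ^ 2 * |y - x| ^ 2 := by
  set c : ℂ := Complex.I * a * Complex.exp (Complex.I * a * y) with hc
  have h := Convex.norm_image_sub_le_of_norm_hasDerivWithin_le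
    (f := fun s : ℝ => Complex.exp (Complex.I * a * s) - s * c)
    (f' := fun s : ℝ => Complex.I * a * Complex.exp (Complex.I * a * s) - c)
    (s := Set.uIcc x y) (C := |a| * (|a| * |y - x|))
    (fun t _ => by
      have h1 := hasDerivAt_expI a t
      have h2 : HasDerivAt (fun s : ℝ => (s : ℂ) * c) c t := by
        simpa using (Complex.ofRealCLM.hasDerivAt (x := t)).mul_const c
      exact (h1.sub h2).hasDerivWithinAt)
    (fun t ht => by
      have htb : |t - y| ≤ |y - x| := by
        have h1 := le_abs_self (y - x)
        have h2 := neg_abs_le (y - x)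
        rcases Set.mem_uIcc.mp ht with ⟨ha1, ha2⟩ | ⟨ha1, ha2⟩ <;>
          rw [abs_le] <;> constructor <;> linarith
      have : Complex.I * a * Complex.exp (Complex.I * a * t) - c
          = Complex.I * a * (Complex.exp (Complex.I * a * t) - Complex.exp (Complex.I * a * y)) := by
        rw [hc]; ring
      simp only [Complex.norm_eq_abs]
      rw [this, map_mul, map_mul]
      have := expI_lip a y t
      have habs : Complex.abs (Complex.I) * Complex.abs (a : ℂ) = |a| := by simp
      calc Complex.abs Complex.I * Complex.abs (a : ℂ) *
            Complex.abs (Complex.exp (Complex.I * a * t) - Complex.exp (Complex.I * a * y))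
          ≤ |a| * (|a| * |t - y|) := by
            rw [habs]
            exact mul_le_mul_of_nonneg_left this (abs_nonneg a)
        _ ≤ |a| * (|a| * |y - x|) := by
            apply mul_le_mul_of_nonneg_left _ (abs_nonneg a)
            exact mul_le_mul_of_nonneg_left htb (abs_nonneg a)
    )
    (convex_uIcc x y) (Set.left_mem_uIcc) (Set.right_mem_uIcc)
  have hsimp : (Complex.exp (Complex.I * a * (y:ℝ)) - (y:ℂ) * c)
      - (Complex.exp (Complex.I * a * (x:ℝ)) - (x:ℂ) * c)
      = (Complex.exp (Complex.I * a * y) - Complex.exp (Complex.I * a * x))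
      - Complex.I * a * ((y - x : ℝ) : ℂ) * Complex.exp (Complex.I * a * y) := by
    rw [hc]; push_cast; ring
  rw [Complex.norm_eq_abs, hsimp, Real.norm_eq_abs] at h
  calc Complex.abs _ ≤ |a| * (|a| * |y - x|) * |y - x| := h
    _ = a ^ 2 * |y - x| ^ 2 := by rw [← _root_.sq_abs a]; ring

private lemma abs_sinc_le_one (x : ℝ) : |sinc x| ≤ 1 := by
  unfold sinc
  split_ifs with h
  · simp
  · rw [abs_div]
    rw [div_le_one (abs_pos.mpr h)]
    exact Real.abs_sin_le_abs

noncomputable def dFactor (N : ℕ) (a : ℝ) : ℂ :=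
  (((2 * (N : ℝ))⁻¹ : ℝ) : ℂ) * ∑ k ∈ Finset.Icc (-(N : ℤ)) (N : ℤ),
    Complex.exp (Complex.I * (a : ℂ) * (k : ℂ) / (N : ℂ))

private lemma Icc_int_eq_map (N : ℕ) :
    Finset.Icc (-(N : ℤ)) (N : ℤ) =
      Finset.map ⟨fun j : ℕ => (j : ℤ) - N, fun x y h => by simp only [sub_left_inj, Int.natCast_inj] at h; exact h⟩ (Finset.range (2 * N + 1)) := by
  ext k
  simp only [Finset.mem_map, Finset.mem_range, Finset.mem_Icc, Function.Embedding.coeFn_mk]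
  constructor
  · rintro ⟨h1, h2⟩
    exact ⟨(k + N).toNat, by omega, by show (((k + N).toNat : ℕ) : ℤ) - N = k; omega⟩
  · rintro ⟨j, hj, rfl⟩
    show -(N:ℤ) ≤ (j:ℤ) - N ∧ (j:ℤ) - N ≤ N
    omega

private lemma dFactor_eq (N : ℕ) (a : ℝ) :
    dFactor N a = (((2 * (N : ℝ))⁻¹ : ℝ) : ℂ) * ∑ j ∈ Finset.range (2 * N + 1),
      Complex.exp (Complex.I * a * ((((j : ℝ) - N) / N : ℝ) : ℂ)) := by
  unfold dFactor
  rw [Icc_int_eq_map, Finset.sum_map]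
  congr 1
  apply Finset.sum_congr rfl
  intro j _
  show Complex.exp (Complex.I * (a : ℂ) * ((((j : ℤ) - N : ℤ)) : ℂ) / (N : ℂ)) = _
  congr 1
  push_cast
  ring

private lemma abs_sum_le_card {ι : Type*} (s : Finset ι) (f : ι → ℂ)
    (h : ∀ i ∈ s, Complex.abs (f i) = 1) :
    Complex.abs (∑ i ∈ s, f i) ≤ s.card := by
  calc Complex.abs (∑ i ∈ s, f i) ≤ ∑ i ∈ s, Complex.abs (f i) := by
        simpa [Complex.norm_eq_abs] using norm_sum_le s f
    _ = s.card := by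
        rw [Finset.sum_congr rfl h]; simp

private lemma dFactor_abs_le (N : ℕ) (hN : 1 ≤ N) (a : ℝ) :
    Complex.abs (dFactor N a) ≤ 2 := by
  have hNR : (1 : ℝ) ≤ (N : ℝ) := by exact_mod_cast hN
  rw [dFactor_eq, map_mul, Complex.abs_ofReal]
  have hcard := abs_sum_le_card (Finset.range (2 * N + 1))
    (fun j => Complex.exp (Complex.I * a * ((((j : ℝ) - N) / N : ℝ) : ℂ)))
    (fun j _ => abs_expI' a _)
  rw [Finset.card_range] at hcard
  have h1 : |(2 * (N : ℝ))⁻¹| = (2 * (N : ℝ))⁻¹ := abs_of_nonneg (by positivity)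
  rw [h1]
  calc (2 * (N : ℝ))⁻¹ * Complex.abs _ ≤ (2 * (N : ℝ))⁻¹ * ((2 * N : ℕ) + 1) := by
        apply mul_le_mul_of_nonneg_left _ (by positivity)
        exact_mod_cast hcard
    _ ≤ 2 := by
        rw [inv_mul_le_iff₀ (by positivity)]
        push_cast
        nlinarith

private lemma riemann_est (N : ℕ) (hN : 1 ≤ N) (a : ℝ) (ha : a ≠ 0) :
    Complex.abs ((((2 * (N : ℝ))⁻¹ : ℝ) : ℂ) * (∑ j ∈ Finset.range (2 * N + 1),
        Complex.exp (Complex.I * a * ((((j : ℝ) - N) / N : ℝ) : ℂ))) - ((sinc a : ℝ) : ℂ))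
      ≤ (1 + |a|) / N := by
  have hNR : (1 : ℝ) ≤ (N : ℝ) := by exact_mod_cast hN
  have hN0 : (N : ℝ) ≠ 0 := by positivity
  have haC : ((a : ℝ) : ℂ) ≠ 0 := Complex.ofReal_ne_zero.mpr ha
  have hIa : Complex.I * (a : ℂ) ≠ 0 := mul_ne_zero Complex.I_ne_zero haC
  set E : ℕ → ℂ := fun j => Complex.exp (Complex.I * a * ((((j : ℝ) - N) / N : ℝ) : ℂ)) with hE
  set g : ℕ → ℂ := fun j => E j / (Complex.I * a) with hg
  -- per-term estimate
  have hterm : ∀ j : ℕ, Complex.abs ((g (j+1) - g j) - ((((N:ℝ)⁻¹ : ℝ)) : ℂ) * E (j+1))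
      ≤ |a| / (N:ℝ)^2 := by
    intro j
    have hdiff : (((j:ℕ)+1 : ℝ) - N) / N - (((j:ℝ) - N) / N) = (N:ℝ)⁻¹ := by
      field_simp
      ring
    have hk := key_mvt a (((j:ℝ) - N) / N) ((((j:ℕ)+1 : ℝ) - N) / N)
    rw [hdiff] at hk
    have heq : (g (j+1) - g j) - ((((N:ℝ)⁻¹ : ℝ)) : ℂ) * E (j+1)
        = ((Complex.exp (Complex.I * a * (((((j:ℕ)+1 : ℝ) - N) / N : ℝ) : ℂ))
            - Complex.exp (Complex.I * a * ((((j:ℝ) - N) / N : ℝ) : ℂ)))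
          - Complex.I * a * (((N:ℝ)⁻¹ : ℝ) : ℂ)
            * Complex.exp (Complex.I * a * (((((j:ℕ)+1 : ℝ) - N) / N : ℝ) : ℂ)))
          / (Complex.I * a) := by
      simp only [hg, hE]
      push_cast
      field_simp
    rw [heq, map_div₀, map_mul, Complex.abs_I, one_mul, Complex.abs_ofReal]
    calc _ ≤ (a^2 * |(N:ℝ)⁻¹|^2) / |a| := by gcongr
      _ = |a| / (N:ℝ)^2 := by
          rw [_root_.abs_of_nonneg (by positivity : (0:ℝ) ≤ (N:ℝ)⁻¹), ← _root_.sq_abs a]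
          field_simp [abs_ne_zero.mpr ha]
  have htel : ∑ j ∈ Finset.range (2*N), (g (j+1) - g j) = g (2*N) - g 0 :=
    Finset.sum_range_sub g (2*N)
  have hval : g (2*N) - g 0 = 2 * ((sinc a : ℝ) : ℂ) := by
    have h2N : (((2*N : ℕ) : ℝ) - N) / N = 1 := by push_cast; field_simp; ring
    have h0 : (((0:ℕ) : ℝ) - N) / N = -1 := by push_cast; field_simp; ring
    simp only [hg, hE, h2N, h0]
    have e1 : Complex.exp (Complex.I * a * ((1:ℝ):ℂ)) = Complex.cos a + Complex.sin a * Complex.I := by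
      rw [show Complex.I * (a:ℂ) * ((1:ℝ):ℂ) = (a:ℂ) * Complex.I by push_cast; ring,
        Complex.exp_mul_I]
    have e2 : Complex.exp (Complex.I * a * ((-1:ℝ):ℂ)) = Complex.cos a - Complex.sin a * Complex.I := by
      rw [show Complex.I * (a:ℂ) * ((-1:ℝ):ℂ) = (-(a:ℂ)) * Complex.I by push_cast; ring,
        Complex.exp_mul_I, Complex.cos_neg, Complex.sin_neg]
      ring
    rw [e1, e2, sinc, if_neg ha, div_sub_div_same]
    push_cast
    field_simp
    ring
  have hshift : ∑ j ∈ Finset.range (2*N), E (j+1) = (∑ j ∈ Finset.range (2*N+1), E j) - E 0 := by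
    rw [Finset.sum_range_succ']
    ring
  have hsum : Complex.abs ((g (2*N) - g 0) - ((((N:ℝ)⁻¹ : ℝ)) : ℂ)
      * ((∑ j ∈ Finset.range (2*N+1), E j) - E 0)) ≤ 2 * |a| / N := by
    have hrw : (g (2*N) - g 0) - ((((N:ℝ)⁻¹ : ℝ)) : ℂ) * ((∑ j ∈ Finset.range (2*N+1), E j) - E 0)
        = ∑ j ∈ Finset.range (2*N), ((g (j+1) - g j) - ((((N:ℝ)⁻¹ : ℝ)) : ℂ) * E (j+1)) := by
      rw [Finset.sum_sub_distrib, htel, ← Finset.mul_sum, hshift]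
    rw [hrw]
    calc Complex.abs _ ≤ ∑ j ∈ Finset.range (2*N),
          Complex.abs ((g (j+1) - g j) - ((((N:ℝ)⁻¹ : ℝ)) : ℂ) * E (j+1)) := by
          simpa [Complex.norm_eq_abs] using norm_sum_le (Finset.range (2*N))
            (fun j => (g (j+1) - g j) - ((((N:ℝ)⁻¹ : ℝ)) : ℂ) * E (j+1))
      _ ≤ ∑ _j ∈ Finset.range (2*N), (|a| / (N:ℝ)^2) :=
          Finset.sum_le_sum (fun j _ => hterm j)
      _ = 2 * |a| / N := by
          rw [Finset.sum_const, Finset.card_range, nsmul_eq_mul]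
          push_cast
          field_simp
  have hdec : (((2 * (N : ℝ))⁻¹ : ℝ) : ℂ) * (∑ j ∈ Finset.range (2*N+1), E j) - ((sinc a : ℝ) : ℂ)
      = (2:ℂ)⁻¹ * (((((N:ℝ)⁻¹ : ℝ)) : ℂ) * ((∑ j ∈ Finset.range (2*N+1), E j) - E 0)
          - (g (2*N) - g 0))
        + ((((2*(N:ℝ))⁻¹ : ℝ)) : ℂ) * E 0 := by
    rw [show ((sinc a : ℝ) : ℂ) = (g (2*N) - g 0) / 2 by rw [hval]; ring]
    push_cast
    field_simp
    ring
  rw [hdec]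
  have h1 : Complex.abs ((2:ℂ)⁻¹ * (((((N:ℝ)⁻¹ : ℝ)) : ℂ)
      * ((∑ j ∈ Finset.range (2*N+1), E j) - E 0) - (g (2*N) - g 0))) ≤ |a| / N := by
    rw [map_mul, AbsoluteValue.map_sub]
    have h2i : Complex.abs ((2:ℂ)⁻¹) = 2⁻¹ := by
      rw [map_inv₀, Complex.abs_two]
    rw [h2i]
    calc (2:ℝ)⁻¹ * Complex.abs ((g (2*N) - g 0) - ((((N:ℝ)⁻¹ : ℝ)) : ℂ)
          * ((∑ j ∈ Finset.range (2*N+1), E j) - E 0))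
        ≤ 2⁻¹ * (2 * |a| / N) := by
          exact mul_le_mul_of_nonneg_left hsum (by norm_num)
      _ = |a| / N := by ring
  have h2 : Complex.abs (((((2*(N:ℝ))⁻¹ : ℝ)) : ℂ) * E 0) = (2*(N:ℝ))⁻¹ := by
    rw [map_mul, Complex.abs_ofReal]
    simp only [hE]
    rw [abs_expI' a, _root_.abs_of_nonneg (by positivity : (0:ℝ) ≤ (2*(N:ℝ))⁻¹)]
    ring
  calc Complex.abs _ ≤ Complex.abs ((2:ℂ)⁻¹ * (((((N:ℝ)⁻¹ : ℝ)) : ℂ)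
        * ((∑ j ∈ Finset.range (2*N+1), E j) - E 0) - (g (2*N) - g 0)))
      + Complex.abs (((((2*(N:ℝ))⁻¹ : ℝ)) : ℂ) * E 0) := Complex.abs.add_le _ _
    _ ≤ |a| / N + (2*(N:ℝ))⁻¹ := add_le_add h1 h2.le
    _ ≤ (1 + |a|) / N := by
        have hle : (2*(N:ℝ))⁻¹ ≤ (N:ℝ)⁻¹ := by
          apply inv_anti₀ (by positivity)
          linarith
        rw [add_div]
        rw [one_div]
        linarith

private lemma dFactor_close (N : ℕ) (hN : 1 ≤ N) (a : ℝ) :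
    Complex.abs (dFactor N a - ((sinc a : ℝ) : ℂ)) ≤ (1 + |a|) / N := by
  have hNR : (1 : ℝ) ≤ (N : ℝ) := by exact_mod_cast hN
  have hN0 : (N : ℝ) ≠ 0 := by positivity
  rw [dFactor_eq]
  rcases eq_or_ne a 0 with rfl | ha
  · have hone : ∀ j ∈ Finset.range (2*N+1),
        Complex.exp (Complex.I * ((0:ℝ):ℂ) * ((((j:ℝ) - N) / N : ℝ) : ℂ)) = 1 := by
      intro j _
      simp
    rw [Finset.sum_congr rfl hone, Finset.sum_const, Finset.card_range, nsmul_eq_mul, mul_one]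
    have hcast : (((2 * (N : ℝ))⁻¹ : ℝ) : ℂ) * ((2*N+1 : ℕ) : ℂ) - ((sinc 0 : ℝ) : ℂ)
        = ((((2 * (N : ℝ))⁻¹ * (2*N+1) - 1 : ℝ)) : ℂ) := by
      simp only [sinc, if_pos rfl]
      push_cast
      ring
    rw [hcast, Complex.abs_ofReal]
    have hv : (2 * (N : ℝ))⁻¹ * (2*N+1) - 1 = (2 * (N:ℝ))⁻¹ := by
      field_simp
      ring
    rw [hv, _root_.abs_of_nonneg (by positivity : (0:ℝ) ≤ (2 * (N:ℝ))⁻¹)]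
    rw [abs_zero, add_zero, one_div]
    apply inv_anti₀ (by positivity)
    linarith
  · exact riemann_est N hN a ha

private lemma abs_prod_sub_prod_le {ι : Type*} (s : Finset ι) (A B : ι → ℂ)
    (hA : ∀ i ∈ s, Complex.abs (A i) ≤ 2) (hB : ∀ i ∈ s, Complex.abs (B i) ≤ 2) :
    Complex.abs (∏ i ∈ s, A i - ∏ i ∈ s, B i)
      ≤ 2 ^ s.card * ∑ i ∈ s, Complex.abs (A i - B i) := by
  induction s using Finset.cons_induction with
  | empty => simp
  | cons a s ha ih =>
    rw [Finset.prod_cons, Finset.prod_cons, Finset.sum_cons, Finset.card_cons]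
    have hA' : ∀ i ∈ s, Complex.abs (A i) ≤ 2 := fun i hi => hA i (Finset.mem_cons_of_mem hi)
    have hB' : ∀ i ∈ s, Complex.abs (B i) ≤ 2 := fun i hi => hB i (Finset.mem_cons_of_mem hi)
    have hQ : Complex.abs (∏ i ∈ s, B i) ≤ 2 ^ s.card := by
      rw [map_prod]
      calc ∏ i ∈ s, Complex.abs (B i) ≤ ∏ _i ∈ s, (2:ℝ) :=
            Finset.prod_le_prod (fun i _ => Complex.abs.nonneg _) hB'
        _ = 2 ^ s.card := by rw [Finset.prod_const]
    have hkey : A a * ∏ i ∈ s, A i - B a * ∏ i ∈ s, B i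
        = A a * (∏ i ∈ s, A i - ∏ i ∈ s, B i) + (A a - B a) * ∏ i ∈ s, B i := by ring
    have h2 : (0:ℝ) ≤ 2 ^ s.card := by positivity
    calc Complex.abs (A a * ∏ i ∈ s, A i - B a * ∏ i ∈ s, B i)
        ≤ Complex.abs (A a * (∏ i ∈ s, A i - ∏ i ∈ s, B i))
          + Complex.abs ((A a - B a) * ∏ i ∈ s, B i) := by
          rw [hkey]; exact Complex.abs.add_le _ _
      _ ≤ 2 * (2 ^ s.card * ∑ i ∈ s, Complex.abs (A i - B i))
          + Complex.abs (A a - B a) * 2 ^ s.card := by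
          rw [map_mul, map_mul]
          apply add_le_add
          · exact mul_le_mul (hA a (Finset.mem_cons_self a s)) (ih hA' hB')
              (Complex.abs.nonneg _) (by norm_num)
          · exact mul_le_mul_of_nonneg_left hQ (Complex.abs.nonneg _)
      _ ≤ 2 ^ (s.card + 1) * (Complex.abs (A a - B a) + ∑ i ∈ s, Complex.abs (A i - B i)) := by
          rw [pow_succ]
          have := Complex.abs.nonneg (A a - B a)
          nlinarith [Finset.sum_nonneg (fun i (_ : i ∈ s) => Complex.abs.nonneg (A i - B i))]

private lemma DNe_eq_prod {d n : ℕ} (Y : Fin n → Fin d → ℝ) (N : ℕ) (ε : ℝ) (j l : Fin n) :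
    DNe Y N ε j l = ∏ i, dFactor N (ε * (Y j i - Y l i)) := by
  unfold DNe dFactor gridSet
  have h1 : ∀ ω : Fin d → ℤ,
      Complex.exp (Complex.I * ((∑ i, ε * (Y j i - Y l i) / (N : ℝ) * (ω i : ℝ) : ℝ) : ℂ))
        = ∏ i, Complex.exp (Complex.I * ((ε * (Y j i - Y l i) : ℝ) : ℂ) * ((ω i : ℤ) : ℂ) / (N : ℂ)) := by
    intro ω
    rw [← Complex.exp_sum]
    congr 1
    push_cast
    rw [Finset.mul_sum]
    apply Finset.sum_congr rfl
    intro i _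
    ring
  simp only [h1]
  have h3 := Finset.prod_univ_sum (fun _ : Fin d => Finset.Icc (-(N:ℤ)) (N:ℤ))
    (fun i k => Complex.exp (Complex.I * ((ε * (Y j i - Y l i) : ℝ) : ℂ) * ((k:ℤ) : ℂ) / (N : ℂ)))
  rw [← h3]
  have h2 : ((((2 * (N : ℝ)) ^ d)⁻¹ : ℝ) : ℂ) = ∏ _i : Fin d, (((2 * (N : ℝ))⁻¹ : ℝ) : ℂ) := by
    rw [Finset.prod_const, Finset.card_univ, Fintype.card_fin]
    push_cast
    rw [inv_pow]
  rw [h2, ← Finset.prod_mul_distrib]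

/-- For `Y` a finite set of pairwise distinct points and `ε₀ > 0`, the
entries of `D_N(ε)` converge to those of the sinc kernel matrix `Sinc_ε(Y)` uniformly in
`ε ∈ [0, ε₀]`. -/
theorem dirichlet_matrix_unif_tendsto_sinc {d n : ℕ}
    (Y : Fin n → Fin d → ℝ) (hY : Function.Injective Y)
    (ε₀ : ℝ) (hε₀ : 0 < ε₀) :
    ∀ δ : ℝ, 0 < δ → ∃ M : ℕ, ∀ N : ℕ, M ≤ N →
      ∀ ε : ℝ, 0 ≤ ε → ε ≤ ε₀ → ∀ j l : Fin n,
        ‖DNe Y N ε j l - ((sincMat Y ε j l : ℝ) : ℂ)‖ ≤ δ := by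
  intro δ hδ
  set R : ℝ := ⨆ p : Fin n × Fin n × Fin d, |Y p.1 p.2.2 - Y p.2.1 p.2.2| with hRdef
  have hR0 : 0 ≤ R := Real.iSup_nonneg (fun p => abs_nonneg _)
  have hRb : ∀ (j l : Fin n) (i : Fin d), |Y j i - Y l i| ≤ R := by
    intro j l i
    rw [hRdef]
    exact le_ciSup (f := fun p : Fin n × Fin n × Fin d => |Y p.1 p.2.2 - Y p.2.1 p.2.2|)
      (Set.Finite.bddAbove (Set.finite_range _)) (j, l, i)
  set C : ℝ := 2 ^ d * d * (1 + ε₀ * R) with hCdef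
  have hC0 : 0 ≤ C := by positivity
  refine ⟨max 1 ⌈C / δ⌉₊, fun N hN ε hε0 hεε₀ j l => ?_⟩
  have hN1 : 1 ≤ N := le_trans (le_max_left _ _) hN
  have hNR : (1:ℝ) ≤ (N:ℝ) := by exact_mod_cast hN1
  have hCN : C / (N:ℝ) ≤ δ := by
    have h1 : (⌈C / δ⌉₊ : ℝ) ≤ (N : ℝ) := by
      exact_mod_cast le_trans (le_max_right 1 _) hN
    have h2 : C / δ ≤ (N : ℝ) := le_trans (Nat.le_ceil _) h1
    rw [div_le_iff₀ (by positivity : (0:ℝ) < (N:ℝ))]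
    rw [div_le_iff₀ hδ] at h2
    nlinarith
  rw [Complex.norm_eq_abs, DNe_eq_prod, sincMat, Complex.ofReal_prod]
  have habs : ∀ i : Fin d, |ε * (Y j i - Y l i)| ≤ ε₀ * R := by
    intro i
    rw [abs_mul, _root_.abs_of_nonneg hε0]
    exact mul_le_mul hεε₀ (hRb j l i) (abs_nonneg _) (le_of_lt hε₀)
  calc Complex.abs (∏ i, dFactor N (ε * (Y j i - Y l i))
        - ∏ i, ((sinc (ε * (Y j i - Y l i)) : ℝ) : ℂ))
      ≤ 2 ^ (Finset.univ : Finset (Fin d)).card * ∑ i,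
          Complex.abs (dFactor N (ε * (Y j i - Y l i)) - ((sinc (ε * (Y j i - Y l i)) : ℝ) : ℂ)) := by
        apply abs_prod_sub_prod_le
        · intro i _
          exact dFactor_abs_le N hN1 _
        · intro i _
          rw [Complex.abs_ofReal]
          exact le_trans (abs_sinc_le_one _) (by norm_num)
    _ ≤ 2 ^ d * ∑ _i : Fin d, ((1 + ε₀ * R) / N) := by
        rw [Finset.card_univ, Fintype.card_fin]
        apply mul_le_mul_of_nonneg_left _ (by positivity)
        apply Finset.sum_le_sum
        intro i _
        calc Complex.abs (dFactor N (ε * (Y j i - Y l i)) - ((sinc (ε * (Y j i - Y l i)) : ℝ) : ℂ))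
            ≤ (1 + |ε * (Y j i - Y l i)|) / N := dFactor_close N hN1 _
          _ ≤ (1 + ε₀ * R) / N := by
              apply div_le_div_of_nonneg_right _ (by positivity)
              linarith [habs i]
    _ = C / N := by
        rw [Finset.sum_const, Finset.card_univ, Fintype.card_fin, nsmul_eq_mul, hCdef]
        ring
    _ ≤ δ := hCN
end
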